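/- Let A be a wqo such that w(A) ≥ ω is additively indecomposable. Then A has a substructure C (a subset with the induced order) with w(C) = w(A) such that C is transferable, i.e., for all x_1, …, x_n ∈ C, the substructure of C consisting of all elements y with y ≰ x_i for every i still has width w(C). -/

import Mathlib

open Ordinal

universe u

/-- A preordered type is a well-quasi-order when every infinite sequence
contains an increasing pair. -/
def IsWqo (A : Type u) [Preorder A] : Prop :=
  ∀ f : ℕ → A, ∃ i j : ℕ, i < j ∧ f i ≤ f j

/-- In the tree of finite sequences satisfying `P` (ordered by reverse prefix),
`t` is a child of `s` when `t` extends `s` by one element and satisfies `P`. -/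
def ExtRel {A : Type u} (P : List A → Prop) (t s : List A) : Prop :=
  P t ∧ ∃ a : A, t = s ++ [a]

/-- The ordinal rank of the tree of finite sequences satisfying `P`, i.e. the rank of its
root (the empty sequence): the rank of a node is `0` on leaves and otherwise the supremum
of the successors of the ranks of its children.  (Junk value `0` when the tree is not
well-founded; in the statements below the wqo hypotheses guarantee well-foundedness.) -/
noncomputable def treeRank {A : Type u} (P : List A → Prop) : Ordinal.{u} :=
  @dite _ (Acc (ExtRel P) ([] : List A)) (Classical.dec _) (fun h => h.rank) (fun _ => 0)

/-- The maximal order type `o(A)`: the rank of the tree `Bad(A)` of bad sequences. -/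
noncomputable def mot (A : Type u) [Preorder A] : Ordinal.{u} :=
  treeRank (fun l : List A => l.Pairwise (fun a b => ¬ a ≤ b))

/-- The height `h(A)`: the rank of the tree `Dec(A)` of strictly decreasing sequences. -/
noncomputable def height (A : Type u) [Preorder A] : Ordinal.{u} :=
  treeRank (fun l : List A => l.Pairwise (fun a b => b < a))

/-- The width `w(A)`: the rank of the tree `Inco(A)` of sequences of pairwise
incomparable elements. -/
noncomputable def width (A : Type u) [Preorder A] : Ordinal.{u} :=
  treeRank (fun l : List A => l.Pairwise (fun a b => ¬ a ≤ b ∧ ¬ b ≤ a))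

/-- Natural (Hessenberg) addition of ordinals, as `Ordinal.nadd` in the older Mathlib
(removed from Mathlib since). -/
noncomputable def Ordinal.nadd : Ordinal.{u} → Ordinal.{u} → Ordinal.{u}
  | a, b =>
    max (⨆ x : Set.Iio a, Order.succ (Ordinal.nadd x.1 b))
      (⨆ x : Set.Iio b, Order.succ (Ordinal.nadd a x.1))
termination_by a b => (a, b)
decreasing_by all_goals cases x; decreasing_tactic

namespace NaturalOps

end NaturalOps

infixl:65 " ♯ " => Ordinal.nadd

theorem NaturalOps.nadd_lt_nadd_right {b c : Ordinal.{u}} (h : b < c) (a : Ordinal.{u}) :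
    b ♯ a < c ♯ a := by
  rw [Ordinal.nadd.eq_1 c a]
  refine lt_of_lt_of_le (Order.lt_succ _) (le_max_of_le_left ?_)
  exact Ordinal.le_iSup (fun x : Set.Iio c => Order.succ (Ordinal.nadd x.1 a)) ⟨b, h⟩

theorem NaturalOps.nadd_lt_nadd_left {b c : Ordinal.{u}} (h : b < c) (a : Ordinal.{u}) :
    a ♯ b < a ♯ c := by
  rw [Ordinal.nadd.eq_1 a c]
  refine lt_of_lt_of_le (Order.lt_succ _) (le_max_of_le_right ?_)
  exact Ordinal.le_iSup (fun x : Set.Iio c => Order.succ (Ordinal.nadd a x.1)) ⟨b, h⟩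

section Aux

variable {α β : Type u}

noncomputable def arank (r : α → α → Prop) (a : α) : Ordinal :=
  @dite _ (Acc r a) (Classical.dec _) (fun h => h.rank) (fun _ => 0)

theorem arank_eq {r : α → α → Prop} {a : α} (h : Acc r a) : arank r a = h.rank :=
  dif_pos h

theorem arank_lt {r : α → α → Prop} {a b : α} (hb : Acc r b) (hr : r a b) :
    arank r a < arank r b := by
  rw [arank_eq hb, arank_eq (hb.inv hr)]
  exact hb.rank_lt_of_rel hr

theorem sim_acc {r : α → α → Prop} {s : β → β → Prop} (R : α → β → Prop)
    (hsim : ∀ ⦃a' a b⦄, r a' a → R a b → ∃ b', R a' b' ∧ s b' b)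
    {b : β} (hb : Acc s b) : ∀ {a : α}, R a b → Acc r a := by
  induction hb with
  | intro b _ ih =>
    intro a hR
    constructor
    intro a' hr
    obtain ⟨b', hR', hs'⟩ := hsim hr hR
    exact ih b' hs' hR'

theorem sim_rank {r : α → α → Prop} {s : β → β → Prop} (R : α → β → Prop)
    (hsim : ∀ ⦃a' a b⦄, r a' a → R a b → ∃ b', R a' b' ∧ s b' b)
    {b : β} (hb : Acc s b) : ∀ {a : α}, R a b → arank r a ≤ arank s b := by
  induction hb with
  | intro b hb ih =>
    intro a hR
    have ha : Acc r a := sim_acc R hsim (Acc.intro b hb) hR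
    rw [arank_eq ha, ha.rank_eq]
    apply Ordinal.iSup_le
    rintro ⟨a', hr⟩
    obtain ⟨b', hR', hs'⟩ := hsim hr hR
    rw [Order.succ_le_iff]
    calc (ha.inv hr).rank = arank r a' := (arank_eq _).symm
    _ ≤ arank s b' := ih b' hs' hR'
    _ < arank s b := arank_lt (Acc.intro b hb) hs'

open NaturalOps in
theorem gameAdd_arank_le {r : α → α → Prop} {s : β → β → Prop} :
    ∀ {p : α × β}, Acc (Prod.GameAdd r s) p → Acc r p.1 → Acc s p.2 →
      arank (Prod.GameAdd r s) p ≤ arank r p.1 ♯ arank s p.2 := by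
  intro p hp
  induction hp with
  | intro p hp ih =>
    intro h1 h2
    rw [arank_eq (Acc.intro p hp), Acc.rank_eq]
    apply Ordinal.iSup_le
    rintro ⟨q, hq⟩
    rw [Order.succ_le_iff]
    have hrk : ((Acc.intro p hp).inv hq).rank = arank (Prod.GameAdd r s) q :=
      (arank_eq _).symm
    rw [hrk]
    cases hq with
    | fst hr =>
      have := ih _ (Prod.GameAdd.fst hr) (h1.inv hr) h2
      exact lt_of_le_of_lt this (nadd_lt_nadd_right (arank_lt h1 hr) _)
    | snd hs =>
      have := ih _ (Prod.GameAdd.snd hs) h1 (h2.inv hs)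
      exact lt_of_le_of_lt this (nadd_lt_nadd_left (arank_lt h2 hs) _)

theorem exists_descending_chain {r : α → α → Prop} {x : α} (hx : ¬ Acc r x) :
    ∃ f : ℕ → α, f 0 = x ∧ ∀ n, r (f (n + 1)) (f n) := by
  have step : ∀ y : {y : α // ¬ Acc r y}, ∃ z : {y : α // ¬ Acc r y}, r z.1 y.1 := by
    rintro ⟨y, hy⟩
    by_contra h
    push_neg at h
    exact hy ⟨y, fun z hz => by_contra fun hz' => h ⟨z, hz'⟩ hz⟩
  choose g hg using step
  refine ⟨fun n => (g^[n] ⟨x, hx⟩).1, by simp, fun n => ?_⟩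
  show r (g^[n + 1] ⟨x, hx⟩).1 (g^[n] ⟨x, hx⟩).1
  rw [Function.iterate_succ_apply']
  exact hg _

end Aux

section Wqo

abbrev Pinco (A : Type u) [Preorder A] : List A → Prop :=
  fun l => l.Pairwise (fun a b => ¬ a ≤ b ∧ ¬ b ≤ a)

theorem width_def (A : Type u) [Preorder A] : width A = arank (ExtRel (Pinco A)) [] := rfl

theorem wqo_acc (A : Type u) [Preorder A] (h : IsWqo A) (l : List A) :
    Acc (ExtRel (Pinco A)) l := by
  by_contra hl
  obtain ⟨f, hf0, hf⟩ := exists_descending_chain hl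
  choose a ha using fun n => (hf n).2
  have pref : ∀ i j, i ≤ j → f i <+: f j := by
    intro i j hij
    induction j, hij using Nat.le_induction with
    | base => exact List.prefix_refl _
    | succ j hij ihj => rw [ha j]; exact ihj.trans (List.prefix_append _ _)
  obtain ⟨i, j, hij, hle⟩ := h a
  have hai : a i ∈ f j := (pref (i + 1) j hij).subset
    (by rw [ha i]; exact List.mem_append_right _ (List.mem_singleton_self _))
  have hp : Pinco A (f (j + 1)) := (hf j).1
  rw [ha j] at hp
  exact ((List.pairwise_append.mp hp).2.2 (a i) hai (a j) (List.mem_singleton_self _)).1 hle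

theorem IsWqo.subtype {A : Type u} [Preorder A] (h : IsWqo A) (s : Set A) : IsWqo ↥s :=
  fun f => h fun n => (f n).1

theorem width_le_of_map {α β : Type u} [Preorder α] [Preorder β] (hβ : IsWqo β)
    (f : α → β) (hf : ∀ a b : α, f a ≤ f b → a ≤ b) : width α ≤ width β := by
  have hsim : ∀ ⦃l' l m⦄, ExtRel (Pinco α) l' l → (m = List.map f l) →
      ∃ m', (m' = List.map f l') ∧ ExtRel (Pinco β) m' m := by
    rintro l' l m ⟨hP, a, rfl⟩ rfl
    refine ⟨List.map f (l ++ [a]), rfl, ?_, f a, by simp⟩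
    exact List.pairwise_map.mpr
      (hP.imp (fun h => ⟨fun hle => h.1 (hf _ _ hle), fun hle => h.2 (hf _ _ hle)⟩))
  calc width α = arank (ExtRel (Pinco α)) [] := rfl
  _ ≤ arank (ExtRel (Pinco β)) [] := sim_rank _ hsim (wqo_acc β hβ []) (by simp)
  _ = width β := rfl

theorem width_eq_of_maps {α β : Type u} [Preorder α] [Preorder β]
    (hα : IsWqo α) (hβ : IsWqo β)
    (f : α → β) (hf : ∀ a b : α, f a ≤ f b → a ≤ b)
    (g : β → α) (hg : ∀ a b : β, g a ≤ g b → a ≤ b) : width α = width β :=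
  le_antisymm (width_le_of_map hβ f hf) (width_le_of_map hα g hg)

open NaturalOps in
theorem width_union_le {A : Type u} [Preorder A] (hA : IsWqo A) (s t : Set A) :
    width ↥(s ∪ t) ≤ width ↥s ♯ width ↥t := by
  set R : List ↥(s ∪ t) → List ↥s × List ↥t → Prop :=
    fun l p => List.Sublist (p.1.map Subtype.val) (l.map Subtype.val) ∧
      List.Sublist (p.2.map Subtype.val) (l.map Subtype.val) with hR
  have key : ∀ (l : List ↥(s ∪ t)), l.Pairwise (fun a b => ¬ a ≤ b ∧ ¬ b ≤ a) →
      (l.map Subtype.val).Pairwise (fun a b : A => ¬ a ≤ b ∧ ¬ b ≤ a) := by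
    intro l hl
    rw [List.pairwise_map]
    exact hl
  have hsim : ∀ ⦃l' l p⦄, ExtRel (Pinco ↥(s ∪ t)) l' l → R l p →
      ∃ p', R l' p' ∧ Prod.GameAdd (ExtRel (Pinco ↥s)) (ExtRel (Pinco ↥t)) p' p := by
    rintro l' l ⟨l1, l2⟩ ⟨hP, a, rfl⟩ ⟨h1, h2⟩
    have hmap : (l ++ [a]).map Subtype.val = l.map Subtype.val ++ [a.1] := by simp
    rcases a.2 with ha | ha
    · refine ⟨(l1 ++ [⟨a.1, ha⟩], l2), ⟨?_, ?_⟩, Prod.GameAdd.fst ⟨?_, ⟨a.1, ha⟩, rfl⟩⟩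
      · rw [hmap, List.map_append]
        exact h1.append (List.Sublist.refl _)
      · rw [hmap]
        exact h2.trans (List.sublist_append_left _ _)
      · have : ((l1 ++ [⟨a.1, ha⟩] : List ↥s).map Subtype.val).Pairwise
            (fun a b : A => ¬ a ≤ b ∧ ¬ b ≤ a) := by
          refine List.Pairwise.sublist ?_ (key _ hP)
          rw [List.map_append, hmap]
          exact h1.append (List.Sublist.refl _)
        exact List.pairwise_map.mp this
    · refine ⟨(l1, l2 ++ [⟨a.1, ha⟩]), ⟨?_, ?_⟩, Prod.GameAdd.snd ⟨?_, ⟨a.1, ha⟩, rfl⟩⟩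
      · rw [hmap]
        exact h1.trans (List.sublist_append_left _ _)
      · rw [hmap, List.map_append]
        exact h2.append (List.Sublist.refl _)
      · have : ((l2 ++ [⟨a.1, ha⟩] : List ↥t).map Subtype.val).Pairwise
            (fun a b : A => ¬ a ≤ b ∧ ¬ b ≤ a) := by
          refine List.Pairwise.sublist ?_ (key _ hP)
          rw [List.map_append, hmap]
          exact h2.append (List.Sublist.refl _)
        exact List.pairwise_map.mp this
  have haccs := wqo_acc ↥s (hA.subtype s) []
  have hacct := wqo_acc ↥t (hA.subtype t) []
  calc width ↥(s ∪ t) = arank (ExtRel (Pinco ↥(s ∪ t))) [] := rfl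
  _ ≤ arank (Prod.GameAdd (ExtRel (Pinco ↥s)) (ExtRel (Pinco ↥t))) ([], []) :=
      sim_rank R hsim (haccs.prod_gameAdd hacct) (by constructor <;> simp [hR])
  _ ≤ arank (ExtRel (Pinco ↥s)) [] ♯ arank (ExtRel (Pinco ↥t)) [] :=
      gameAdd_arank_le (haccs.prod_gameAdd hacct) haccs hacct
  _ = width ↥s ♯ width ↥t := rfl

theorem width_le_one {α : Type u} [Preorder α] (h : ∀ a b : α, a ≤ b) : width α ≤ 1 := by
  have hnochild : ∀ (x : α) (l : List α) (y : List α), ¬ ExtRel (Pinco α) y (l ++ [x]) := by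
    rintro x l y ⟨hP, b, rfl⟩
    exact ((List.pairwise_append.mp hP).2.2 x (List.mem_append_right _
      (List.mem_singleton_self _)) b (List.mem_singleton_self _)).1 (h x b)
  have haccne : ∀ (x : α) (l : List α), Acc (ExtRel (Pinco α)) (l ++ [x]) :=
    fun x l => ⟨_, fun y hy => absurd hy (hnochild x l y)⟩
  have hacc : Acc (ExtRel (Pinco α)) [] := by
    constructor
    rintro y ⟨hP, b, rfl⟩
    exact haccne b []
  rw [width_def, arank_eq hacc, hacc.rank_eq]
  apply Ordinal.iSup_le
  rintro ⟨y, hy⟩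
  have h0 : (hacc.inv hy).rank ≤ 0 := by
    rw [Acc.rank_eq]
    apply Ordinal.iSup_le
    rintro ⟨z, hz⟩
    obtain ⟨hP, b, rfl⟩ := hy
    exact absurd hz (hnochild b [] z)
  calc Order.succ (hacc.inv hy).rank ≤ Order.succ 0 := Order.succ_le_succ h0
  _ = 1 := by simp

theorem wqo_wf_lt {A : Type u} [Preorder A] (hA : IsWqo A) :
    WellFounded (fun a b : A => a ≤ b ∧ ¬ b ≤ a) := by
  constructor
  intro x
  by_contra hx
  obtain ⟨f, -, hf⟩ := exists_descending_chain hx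
  have hdesc : ∀ i j, i ≤ j → f j ≤ f i := by
    intro i j hij
    induction j, hij using Nat.le_induction with
    | base => exact le_refl _
    | succ j hij ihj => exact (hf j).1.trans ihj
  obtain ⟨i, j, hij, hle⟩ := hA f
  exact (hf i).2 (hle.trans (hdesc (i + 1) j hij))

end Wqo

section Main

open NaturalOps

theorem core {A : Type u} [Preorder A] (hA : IsWqo A) (hω : ω ≤ width A)
    (hind : ∀ β γ : Ordinal.{u}, β < width A → γ < width A → β ♯ γ < width A)
    (C : Set A) (hwC : width ↥C = width A)
    (hsmall : ∀ c : A, c ∈ C → width ↥{a : A | a ≤ c} < width A)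
    (n : ℕ) (x : Fin n → ↥C) :
    width ↥{y : ↥C | ∀ i, ¬ y ≤ x i} = width ↥C := by
  have hmono : ∀ s : Set A, width ↥s ≤ width A :=
    fun s => width_le_of_map hA Subtype.val (fun a b h => h)
  set R : ℕ → Set A :=
    fun k => {a : A | a ∈ C ∧ ∀ i : Fin n, (i : ℕ) < k → ¬ a ≤ (x i : A)} with hRdef
  have h0 : width ↥(R 0) = width A := by
    rw [← hwC]
    exact width_eq_of_maps (hA.subtype _) (hA.subtype _)
      (fun a => ⟨a.1, a.2.1⟩) (fun a b h => h)
      (fun a => ⟨a.1, a.2, fun i hi => absurd hi (Nat.not_lt_zero _)⟩) (fun a b h => h)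
  have hstep : ∀ k, k < n → width ↥(R k) = width A → width ↥(R (k + 1)) = width A := by
    intro k hk hwk
    have hsub : R k ⊆ R (k + 1) ∪ {a : A | a ≤ (x ⟨k, hk⟩ : A)} := by
      rintro a ⟨haC, hai⟩
      by_cases hak : a ≤ (x ⟨k, hk⟩ : A)
      · exact Or.inr hak
      · refine Or.inl ⟨haC, fun i hi => ?_⟩
        rcases Nat.lt_succ_iff_lt_or_eq.mp hi with h | h
        · exact hai i h
        · have : i = ⟨k, hk⟩ := Fin.ext h
          rw [this]
          exact hak
    have h1 : width ↥(R k) ≤ width ↥(R (k + 1)) ♯ width ↥{a : A | a ≤ (x ⟨k, hk⟩ : A)} :=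
      (width_le_of_map (hA.subtype _) (Set.inclusion hsub)
        (fun a b h => h)).trans (width_union_le hA _ _)
    rcases lt_or_eq_of_le (hmono (R (k + 1))) with hlt | heq
    · exfalso
      have hbig := hind _ _ hlt (hsmall _ (x ⟨k, hk⟩).2)
      rw [hwk] at h1
      exact absurd (h1.trans_lt hbig) (lt_irrefl _)
    · exact heq
  have hall : ∀ k, k ≤ n → width ↥(R k) = width A := by
    intro k
    induction k with
    | zero => exact fun _ => h0
    | succ k ih => exact fun hk => hstep k hk (ih (Nat.le_of_succ_le hk))
  have hfin : width ↥{y : ↥C | ∀ i, ¬ y ≤ x i} = width ↥(R n) :=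
    width_eq_of_maps ((hA.subtype C).subtype _) (hA.subtype _)
      (fun y => ⟨y.1.1, y.1.2, fun i _ => y.2 i⟩) (fun a b h => h)
      (fun a => ⟨⟨a.1, a.2.1⟩, fun i => a.2.2 i i.2⟩) (fun a b h => h)
  rw [hfin, hall n le_rfl, hwC]

open NaturalOps in
/-- If `w(A) ≥ ω` is additively indecomposable, then `A` has a transferable
substructure `C` of the same width: removing the downward closure of finitely many
elements of `C` never decreases the width of `C`. -/
theorem transferable_substructure (A : Type u) [Preorder A] (hA : IsWqo A)
    (hω : ω ≤ width A)
    (hind : ∀ β γ : Ordinal.{u}, β < width A → γ < width A → β ♯ γ < width A) :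
    ∃ C : Set A, width ↥C = width A ∧
      ∀ (n : ℕ) (x : Fin n → ↥C),
        width ↥{y : ↥C | ∀ i, ¬ y ≤ x i} = width ↥C := by
  classical
  have hmono : ∀ s : Set A, width ↥s ≤ width A :=
    fun s => width_le_of_map hA Subtype.val (fun a b h => h)
  by_cases hgood : ∃ x : A, width ↥{a : A | a ≤ x} = width A
  · obtain ⟨x, hx⟩ := hgood
    have wflt : WellFounded (fun a b : A => a ≤ b ∧ ¬ b ≤ a) := wqo_wf_lt hA
    set S := {x : A | width ↥{a : A | a ≤ x} = width A} with hS
    set x₀ := wflt.min S ⟨x, hx⟩ with hx₀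
    have hx₀S : x₀ ∈ S := wflt.min_mem S _
    have hminS : ∀ y ∈ S, ¬ (y ≤ x₀ ∧ ¬ x₀ ≤ y) := fun y hy => wflt.not_lt_min S hy
    set C := {a : A | a ≤ x₀ ∧ ¬ x₀ ≤ a} with hC
    have hwC : width ↥C = width A := by
      have hsplit : {a : A | a ≤ x₀} = C ∪ {a : A | a ≤ x₀ ∧ x₀ ≤ a} := by
        ext a
        by_cases h : x₀ ≤ a <;> simp [hC, h]
      have hE : width ↥{a : A | a ≤ x₀ ∧ x₀ ≤ a} ≤ 1 :=
        width_le_one (fun a b => show a.1 ≤ b.1 from le_trans a.2.1 b.2.2)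
      have h1 : width A ≤ width ↥C ♯ width ↥{a : A | a ≤ x₀ ∧ x₀ ≤ a} := by
        have := hx₀S
        rw [hS, Set.mem_setOf_eq, hsplit] at this
        rw [← this]
        exact width_union_le hA _ _
      rcases lt_or_eq_of_le (hmono C) with hlt | heq
      · exfalso
        have hElt : width ↥{a : A | a ≤ x₀ ∧ x₀ ≤ a} < width A :=
          lt_of_le_of_lt hE (lt_of_lt_of_le Ordinal.one_lt_omega0 hω)
        exact absurd (h1.trans_lt (hind _ _ hlt hElt)) (lt_irrefl _)
      · exact heq
    refine ⟨C, hwC, fun n x => core hA hω hind C hwC ?_ n x⟩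
    intro c hc
    rcases lt_or_eq_of_le (hmono {a : A | a ≤ c}) with h | h
    · exact h
    · exact absurd ⟨hc.1, hc.2⟩ (hminS c h)
  · have huniv : width ↥(Set.univ : Set A) = width A :=
      width_eq_of_maps (hA.subtype _) hA Subtype.val (fun a b h => h)
        (fun a => ⟨a, trivial⟩) (fun a b h => h)
    refine ⟨Set.univ, huniv, fun n x => core hA hω hind Set.univ huniv ?_ n x⟩
    intro c _
    rcases lt_or_eq_of_le (hmono {a : A | a ≤ c}) with h | h
    · exact h
    · exact absurd ⟨c, h⟩ hgood


end Main
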